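/- (Dense pancake condition is preserved under mixtures.) Let D_1,…,D_K be probability measures on ℝ^d × {1,…,k} and q_1,…,q_K ≥ 0 with Σ_{j=1}^K q_j = 1; set D := Σ_{j=1}^K q_j·D_j. Let S be a finite family of points of ℝ^d × {1,…,k} partitioned into subfamilies S_1,…,S_K, let α ∈ (0,1], τ > 0, ρ > 0 and β ∈ (0,1), and assume |S_j| ≥ (α/2)·|S| for every j. Suppose that for every j ∈ {1,…,K} and every unit vector w ∈ ℝ^{kd}, D_j( { (x,y) : |{ i ∈ S_j : (x_i,y_i) ∈ P_w^τ(x,y) }| ≥ ρ·|S_j| } ) ≥ 1 − β. Then for every unit vector w ∈ ℝ^{kd}, D( { (x,y) : |{ i ∈ S : (x_i,y_i) ∈ P_w^τ(x,y) }| ≥ (αρ/2)·|S| } ) ≥ 1 − β; i.e., S satisfies the (τ, αρ/2, β)-dense pancake condition with respect to D. -/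

import Mathlib

open scoped BigOperators RealInnerProductSpace
open Finset MeasureTheory

/-- The class-sensitive feature map `Ψ : ℝ^d × {1,…,k} → ℝ^{kd}`: the `y`-th block of
`d` coordinates of `Psi d k x y` equals `x`, the remaining coordinates are zero. -/
noncomputable def Psi (d k : ℕ) (x : EuclideanSpace ℝ (Fin d)) (y : Fin k) :
    EuclideanSpace ℝ (Fin k × Fin d) :=
  WithLp.toLp 2 fun p : Fin k × Fin d => if p.1 = y then x p.2 else 0

/-- The `y`-th block `w_y ∈ ℝ^d` of a vector `w ∈ ℝ^{kd}`. -/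
noncomputable def block (d k : ℕ) (w : EuclideanSpace ℝ (Fin k × Fin d)) (y : Fin k) :
    EuclideanSpace ℝ (Fin d) :=
  WithLp.toLp 2 fun j => w (y, j)

/-- The multiclass pancake `P_w^τ(x,y)`: pairs `(x',y')` with `y' = y` and
`|⟨w_ȳ, x' − x⟩| ≤ τ` for every label `ȳ`. -/
def pancake (d k : ℕ) (w : EuclideanSpace ℝ (Fin k × Fin d)) (τ : ℝ)
    (x : EuclideanSpace ℝ (Fin d)) (y : Fin k) :
    Set (EuclideanSpace ℝ (Fin d) × Fin k) :=
  {p | p.2 = y ∧ ∀ ybar : Fin k, |⟪block d k w ybar, p.1 - x⟫| ≤ τ}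

theorem le_sum_smul_measure_apply {Ω ι : Type*} [MeasurableSpace Ω] [Fintype ι]
    (μ : ι → Measure Ω) (q : ι → NNReal) (hq : ∑ j, q j = 1) {s : Set Ω} {c : ENNReal}
    (h : ∀ j, c ≤ μ j s) : c ≤ (∑ j, q j • μ j) s := by
  have hq' : ∑ j, (q j : ENNReal) = 1 := by rw [← ENNReal.ofNNReal_finsetSum, hq, ENNReal.coe_one]
  calc c = ∑ j, (q j : ENNReal) * c := by rw [← Finset.sum_mul, hq', one_mul]
    _ ≤ ∑ j, (q j : ENNReal) * μ j s := by gcongr with j; exact h j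
    _ = (∑ j, q j • μ j) s := by simp

theorem mul_mul_card_le_card_filter_of_subset {ι : Type*} {S T : Finset ι} (P : ι → Prop)
    [DecidablePred P] (hTS : T ⊆ S) {a ρ : ℝ} (hρ : 0 ≤ ρ) (hsize : a * #S ≤ #T)
    (hT : ρ * #T ≤ #(T.filter P)) : a * ρ * #S ≤ #(S.filter P) :=
  calc a * ρ * #S = ρ * (a * #S) := by ring
    _ ≤ ρ * #T := by gcongr
    _ ≤ #(T.filter P) := hT
    _ ≤ #(S.filter P) := by exact_mod_cast card_le_card (filter_subset_filter P hTS)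

open scoped Classical in
theorem stmt_15_general {ι : Type*} [DecidableEq ι] (d k K : ℕ)
    (Dj : Fin K → MeasureTheory.Measure (EuclideanSpace ℝ (Fin d) × Fin k))
    (q : Fin K → NNReal) (hq : ∑ j : Fin K, q j = 1)
    (S : Finset ι) (Sj : Fin K → Finset ι)
    (hpart : S = Finset.univ.biUnion Sj)
    (p : ι → EuclideanSpace ℝ (Fin d) × Fin k)
    (α τ ρ β : ℝ) (hρ : 0 < ρ)
    (hsize : ∀ j : Fin K, (α/2) * (S.card : ℝ) ≤ ((Sj j).card : ℝ))
    (hdense : ∀ j : Fin K, ∀ w : EuclideanSpace ℝ (Fin k × Fin d), ‖w‖ = 1 →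
      ENNReal.ofReal (1 - β) ≤
        Dj j {z | ρ * ((Sj j).card : ℝ) ≤
          (((Sj j).filter fun i => p i ∈ pancake d k w τ z.1 z.2).card : ℝ)}) :
    ∀ w : EuclideanSpace ℝ (Fin k × Fin d), ‖w‖ = 1 →
      ENNReal.ofReal (1 - β) ≤
        (∑ j : Fin K, q j • Dj j) {z | (α * ρ / 2) * (S.card : ℝ) ≤
          ((S.filter fun i => p i ∈ pancake d k w τ z.1 z.2).card : ℝ)} := by
  intro w hw
  refine le_sum_smul_measure_apply Dj q hq fun j => (hdense j w hw).trans (measure_mono ?_)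
  intro z hz
  have hSjS : Sj j ⊆ S := hpart ▸ subset_biUnion_of_mem Sj (mem_univ j)
  have hdenseS := mul_mul_card_le_card_filter_of_subset _ hSjS hρ.le (hsize j) hz
  rwa [div_mul_eq_mul_div] at hdenseS

open scoped Classical in
/-- the dense pancake condition is preserved under mixtures. -/
theorem stmt_15 {ι : Type*} [DecidableEq ι] (d k K : ℕ) (hd : 0 < d) (hk : 0 < k) (hK : 0 < K)
    (Dj : Fin K → MeasureTheory.Measure (EuclideanSpace ℝ (Fin d) × Fin k))
    (hprob : ∀ j, MeasureTheory.IsProbabilityMeasure (Dj j))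
    (q : Fin K → NNReal) (hq : ∑ j : Fin K, q j = 1)
    (S : Finset ι) (Sj : Fin K → Finset ι)
    (hpart : S = Finset.univ.biUnion Sj)
    (hdisj : ∀ j j' : Fin K, j ≠ j' → Disjoint (Sj j) (Sj j'))
    (p : ι → EuclideanSpace ℝ (Fin d) × Fin k)
    (α τ ρ β : ℝ) (hα : α ∈ Set.Ioc (0:ℝ) 1) (hτ : 0 < τ) (hρ : 0 < ρ)
    (hβ : β ∈ Set.Ioo (0:ℝ) 1)
    (hsize : ∀ j : Fin K, (α/2) * (S.card : ℝ) ≤ ((Sj j).card : ℝ))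
    (hdense : ∀ j : Fin K, ∀ w : EuclideanSpace ℝ (Fin k × Fin d), ‖w‖ = 1 →
      ENNReal.ofReal (1 - β) ≤
        Dj j {z | ρ * ((Sj j).card : ℝ) ≤
          (((Sj j).filter fun i => p i ∈ pancake d k w τ z.1 z.2).card : ℝ)}) :
    ∀ w : EuclideanSpace ℝ (Fin k × Fin d), ‖w‖ = 1 →
      ENNReal.ofReal (1 - β) ≤
        (∑ j : Fin K, q j • Dj j) {z | (α * ρ / 2) * (S.card : ℝ) ≤
          ((S.filter fun i => p i ∈ pancake d k w τ z.1 z.2).card : ℝ)} :=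
  stmt_15_general d k K Dj q hq S Sj hpart p α τ ρ β hρ hsize hdense
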